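/- arXiv:1903.06065 — 2 statements merged into one kernel-verified Lean document; each statement's English description precedes it below -/
import Mathlib

section
/- Filter the reduced cellular Z/2-chain complex C̃_*(C_m(Σ_{g,1})^∞) by assigning to a tuple h = (l, x, u, v) the norm Σ_{i=1}^l x_i; the norm is weakly decreasing along the differential, so the span F_p of tuples of norm ≤ p is a subcomplex. For each p, the filtration stratum F_p/F_{p−1} is isomorphic as a chain complex to a direct sum of copies of the reduced cellular chain complex C̃_*(C_p(D)^∞) of the configuration space of p points in the open disc, with degrees shifted by m−p: there is one copy for each partition m − p = Σ_{i=1}^g (u_i + v_i) with u_i, v_i ≥ 0. -/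
/-!
# Statement 4 (Bianchi, "Splitting of the homology of the punctured mapping class group")

Filter the reduced cellular `ℤ/2`-chain complex `C̃_*(C_m(Σ_{g,1})^∞)` by the norm
`Σ_{i=1}^l x_i` of a tuple `h = (l, x, u, v)`.  The norm is weakly decreasing along the
differential, so the span `F_p` of the tuples of norm `≤ p` is a subcomplex; for each `p`
the filtration stratum `F_p / F_{p−1}` is isomorphic, as a chain complex, to a direct sum of
copies of the reduced cellular chain complex `C̃_*(C_p(D)^∞)` of the configuration space of
`p` points in the open disc (the case `g = 0`), with degrees shifted by `m − p`: one copy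
for each partition `m − p = Σ_{i=1}^g (u_i + v_i)` with `u_i, v_i ≥ 0`.

The differential is the one computed in Lemma 3.2 (Statement 3), encoded by the explicit
coefficient function `cellCoef`.  The stratum isomorphism is encoded by a bijection of the
basis tuples of norm exactly `p` with pairs (partition `(u, v)` of `m − p`, disc tuple of
weight `p`), shifting dimensions by `m − p` and matching the induced differentials: on the
stratum only the norm-preserving (inner) boundaries survive, and they agree with the
differential of the disc complex on the `x`-part, separately in each copy.
-/


/-- A tuple `h = (l, x, u, v)` indexing a cell `e^h` of the CW structure on the one-point
compactification `C_m(Σ_{g,1})^∞`: a list `x = (x_1, …, x_l)` of positive integers (the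
numbers of configuration points on the `l` occupied vertical lines of the model square,
ordered from left to right) and vectors `u, v : Fin g → ℕ` (the numbers of configuration
points on the arcs `U_i`, `V_i`), with `Σ x_i + Σ (u_i + v_i) = m`. -/
structure ConfTuple (g m : ℕ) where
  /-- the numbers of points on the occupied vertical lines, from left to right -/
  x : List ℕ
  /-- the numbers of points on the arcs `U_1, …, U_g` -/
  u : Fin g → ℕ
  /-- the numbers of points on the arcs `V_1, …, V_g` -/
  v : Fin g → ℕ
  x_pos : ∀ a ∈ x, 1 ≤ a
  total : x.sum + (∑ i, (u i + v i)) = m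

namespace ConfTuple

variable {g m : ℕ}

/-- The dimension `m + l` of the cell `e^h`. -/
def dim (h : ConfTuple g m) : ℕ := m + h.x.length

/-- The filtration norm `Σ_{i=1}^l x_i` of the tuple `h`. -/
def fnorm (h : ConfTuple g m) : ℕ := h.x.sum

end ConfTuple

open scoped Classical

/-- The total contribution of the *inner boundaries* to the coefficient of `h'` in `∂h`:
for each `1 ≤ i ≤ l−1` such that `h'` is obtained from `h` by merging the consecutive
entries `x_i, x_{i+1}` into `x_i + x_{i+1}` (keeping `u` and `v`), the contribution is the
mod-2 binomial coefficient `binom(x_i + x_{i+1}, x_i)`. -/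
noncomputable def innerCoef {g m : ℕ} (h h' : ConfTuple g m) : ZMod 2 :=
  ∑ i ∈ Finset.range h.x.length,
    if i + 1 < h.x.length ∧ h'.u = h.u ∧ h'.v = h.v ∧
        h'.x = h.x.take i ++ (h.x.getD i 0 + h.x.getD (i + 1) 0) :: h.x.drop (i + 2)
    then (Nat.choose (h.x.getD i 0 + h.x.getD (i + 1) 0) (h.x.getD i 0) : ZMod 2)
    else 0

/-- The contribution of the *left outer boundary* to the coefficient of `h'` in `∂h`:
`h'` is obtained from `h` by deleting the first entry `x_1` of `x`, choosing a splitting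
`x_1 = Σ_i (ũ_i + ṽ_i)` and setting `u'_i = u_i + ũ_i`, `v'_i = v_i + ṽ_i`; the contribution
is `∏_i binom(u_i + ũ_i, u_i) · binom(v_i + ṽ_i, v_i)` mod 2. -/
noncomputable def leftCoef {g m : ℕ} (h h' : ConfTuple g m) : ZMod 2 :=
  if h.x ≠ [] ∧ h'.x = h.x.tail ∧ (∀ i, h.u i ≤ h'.u i ∧ h.v i ≤ h'.v i) ∧
      h.x.headD 0 = ∑ i, ((h'.u i - h.u i) + (h'.v i - h.v i))
  then ∏ i, ((Nat.choose (h'.u i) (h.u i) : ZMod 2) * (Nat.choose (h'.v i) (h.v i) : ZMod 2))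
  else 0

/-- The contribution of the *right outer boundary* to the coefficient of `h'` in `∂h`:
as for the left outer boundary, but deleting the last entry `x_l` of `x`. -/
noncomputable def rightCoef {g m : ℕ} (h h' : ConfTuple g m) : ZMod 2 :=
  if h.x ≠ [] ∧ h'.x = h.x.dropLast ∧ (∀ i, h.u i ≤ h'.u i ∧ h.v i ≤ h'.v i) ∧
      h.x.getLastD 0 = ∑ i, ((h'.u i - h.u i) + (h'.v i - h.v i))
  then ∏ i, ((Nat.choose (h'.u i) (h.u i) : ZMod 2) * (Nat.choose (h'.v i) (h.v i) : ZMod 2))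
  else 0

/-- The coefficient of `h'` in `∂h` as computed in Lemma 3.2: the sum of the inner, left
outer and right outer contributions (in particular, simultaneous left and right outer
contributions — which occur exactly when all entries of `x` are equal — cancel mod 2). -/
noncomputable def cellCoef {g m : ℕ} (h h' : ConfTuple g m) : ZMod 2 :=
  innerCoef h h' + leftCoef h h' + rightCoef h h'

/-- Partitions `k = Σ_{i=1}^g (u_i + v_i)` with `u_i, v_i ≥ 0`, indexing the copies of the
disc complex in the filtration stratum. -/
def Splittings (g k : ℕ) : Type :=
  {w : (Fin g → ℕ) × (Fin g → ℕ) // (∑ i, (w.1 i + w.2 i)) = k}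


/-!
Every boundary either merges two adjacent lines (inner: `x` keeps its sum, `u` and `v` are
unchanged) or empties an extreme line onto the arcs (outer: the sum of `x` drops by the
positive entry removed).  On a stratum only inner boundaries survive; they depend on `x`
alone and never change `(u, v)`, so forgetting `(u, v)` identifies the stratum with a copy of
the disc complex for each value of `(u, v)`.
-/

theorem List.sum_take_merge_drop {M : Type*} [AddCommMonoid M] (x : List M) {i : ℕ}
    (hi : i + 1 < x.length) :
    (x.take i ++ (x.getD i 0 + x.getD (i + 1) 0) :: x.drop (i + 2)).sum = x.sum := by
  conv_rhs => rw [← x.take_append_drop i, List.drop_eq_getElem_cons (by omega),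
    List.drop_eq_getElem_cons hi]
  simp only [List.getD_eq_getElem _ _ hi, List.getD_eq_getElem _ _ (by omega : i < x.length),
    List.sum_append, List.sum_cons, add_assoc]

namespace ConfTuple

variable {g m : ℕ}

theorem ext {h h' : ConfTuple g m} (hx : h.x = h'.x) (hu : h.u = h'.u) (hv : h.v = h'.v) :
    h = h' := by
  cases h; cases h'; simp_all

theorem fnorm_add_sum_arcs (h : ConfTuple g m) : h.fnorm + ∑ i, (h.u i + h.v i) = m :=
  h.total

theorem fnorm_eq_of_genus_zero (h : ConfTuple 0 m) : h.fnorm = m := by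
  simpa using h.fnorm_add_sum_arcs

theorem fnorm_eq_of_innerCoef_ne_zero {h h' : ConfTuple g m} (hc : innerCoef h h' ≠ 0) :
    h'.fnorm = h.fnorm := by
  obtain ⟨i, -, hi⟩ := Finset.exists_ne_zero_of_sum_ne_zero hc
  obtain ⟨hlen, -, -, hx⟩ := not_not.mp fun hn => hi (if_neg hn)
  rw [fnorm, hx, List.sum_take_merge_drop _ hlen, fnorm]

theorem fnorm_lt_of_leftCoef_ne_zero {h h' : ConfTuple g m} (hc : leftCoef h h' ≠ 0) :
    h'.fnorm < h.fnorm := by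
  obtain ⟨hne, hx, -, -⟩ := not_not.mp fun hn => hc (if_neg hn)
  obtain ⟨a, t, hat⟩ := List.exists_cons_of_ne_nil hne
  have ha : 1 ≤ a := h.x_pos a (hat ▸ List.mem_cons_self)
  simp only [fnorm, hx, hat, List.tail_cons, List.sum_cons]
  omega

theorem fnorm_lt_of_rightCoef_ne_zero {h h' : ConfTuple g m} (hc : rightCoef h h' ≠ 0) :
    h'.fnorm < h.fnorm := by
  obtain ⟨hne, hx, -, -⟩ := not_not.mp fun hn => hc (if_neg hn)
  have ha : 1 ≤ h.x.getLast hne := h.x_pos _ (List.getLast_mem hne)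
  have hsum := congrArg List.sum (List.dropLast_append_getLast hne)
  simp only [List.sum_append, List.sum_cons, List.sum_nil] at hsum
  simp only [fnorm, hx]
  omega

theorem fnorm_le_of_cellCoef_ne_zero {h h' : ConfTuple g m} (hc : cellCoef h h' ≠ 0) :
    h'.fnorm ≤ h.fnorm := by
  by_contra hlt
  have hinner : innerCoef h h' = 0 := by
    by_contra hi; exact hlt (fnorm_eq_of_innerCoef_ne_zero hi).le
  have hleft : leftCoef h h' = 0 := by
    by_contra hl; exact hlt (fnorm_lt_of_leftCoef_ne_zero hl).le
  have hright : rightCoef h h' = 0 := by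
    by_contra hr; exact hlt (fnorm_lt_of_rightCoef_ne_zero hr).le
  exact hc (by rw [cellCoef, hinner, hleft, hright, add_zero, add_zero])

theorem cellCoef_eq_innerCoef_of_fnorm_eq {h h' : ConfTuple g m} (heq : h'.fnorm = h.fnorm) :
    cellCoef h h' = innerCoef h h' := by
  have hleft : leftCoef h h' = 0 := by
    by_contra hl; exact (fnorm_lt_of_leftCoef_ne_zero hl).ne heq
  have hright : rightCoef h h' = 0 := by
    by_contra hr; exact (fnorm_lt_of_rightCoef_ne_zero hr).ne heq
  rw [cellCoef, hleft, hright, add_zero, add_zero]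

theorem innerCoef_eq_zero_of_arcs_ne {h h' : ConfTuple g m} (hne : ¬(h'.u = h.u ∧ h'.v = h.v)) :
    innerCoef h h' = 0 :=
  Finset.sum_eq_zero fun _ _ => if_neg fun ⟨_, hu, hv, _⟩ => hne ⟨hu, hv⟩

theorem innerCoef_congr {g' m' : ℕ} {h h' : ConfTuple g m} {k k' : ConfTuple g' m'}
    (hx : h.x = k.x) (hx' : h'.x = k'.x) (harcs : h'.u = h.u ∧ h'.v = h.v)
    (harcs' : k'.u = k.u ∧ k'.v = k.v) : innerCoef h h' = innerCoef k k' := by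
  unfold innerCoef
  simp only [hx, hx', harcs, harcs', true_and]

def stratumEquiv {p : ℕ} (hp : p ≤ m) :
    {h : ConfTuple g m // h.fnorm = p} ≃ (Splittings g (m - p) × ConfTuple 0 p) where
  toFun h :=
    (⟨(h.1.u, h.1.v), by have := h.1.fnorm_add_sum_arcs; have := h.2; dsimp only; omega⟩,
      ⟨h.1.x, Fin.elim0, Fin.elim0, h.1.x_pos, by simpa [fnorm] using h.2⟩)
  invFun wd :=
    ⟨⟨wd.2.x, wd.1.1.1, wd.1.1.2, wd.2.x_pos, by
        rw [← fnorm, wd.2.fnorm_eq_of_genus_zero, wd.1.2]; omega⟩,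
      wd.2.fnorm_eq_of_genus_zero⟩
  left_inv _ := rfl
  right_inv wd := Prod.ext rfl (ext rfl (Subsingleton.elim _ _) (Subsingleton.elim _ _))

theorem stratumEquiv_fst_eq_iff {p : ℕ} (hp : p ≤ m)
    {h h' : {h : ConfTuple g m // h.fnorm = p}} :
    (stratumEquiv hp h).1 = (stratumEquiv hp h').1 ↔ h.1.u = h'.1.u ∧ h.1.v = h'.1.v :=
  Subtype.ext_iff.trans Prod.ext_iff

theorem dim_eq_dim_stratumEquiv_add {p : ℕ} (hp : p ≤ m)
    (h : {h : ConfTuple g m // h.fnorm = p}) :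
    h.1.dim = (stratumEquiv hp h).2.dim + (m - p) := by
  change m + h.1.x.length = p + h.1.x.length + (m - p)
  omega

theorem cellCoef_eq_cellCoef_stratumEquiv {p : ℕ} (hp : p ≤ m)
    (h h' : {h : ConfTuple g m // h.fnorm = p}) :
    cellCoef h.1 h'.1 = if (stratumEquiv hp h).1 = (stratumEquiv hp h').1 then
      cellCoef (stratumEquiv hp h).2 (stratumEquiv hp h').2 else 0 := by
  rw [cellCoef_eq_innerCoef_of_fnorm_eq (h'.2.trans h.2.symm), cellCoef_eq_innerCoef_of_fnorm_eq
    ((fnorm_eq_of_genus_zero _).trans (fnorm_eq_of_genus_zero _).symm)]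
  split_ifs with hsame
  · obtain ⟨hu, hv⟩ := (stratumEquiv_fst_eq_iff hp).1 hsame
    exact innerCoef_congr rfl rfl ⟨hu.symm, hv.symm⟩
      ⟨Subsingleton.elim _ _, Subsingleton.elim _ _⟩
  · exact innerCoef_eq_zero_of_arcs_ne fun ⟨hu, hv⟩ =>
      hsame ((stratumEquiv_fst_eq_iff hp).2 ⟨hu.symm, hv.symm⟩)

end ConfTuple

/-- (i) The norm is weakly decreasing along the differential of the reduced
cellular chain complex of `C_m(Σ_{g,1})^∞`, so the tuples of norm `≤ p` span a subcomplex
`F_p`.  (ii) For every `p ≤ m` (for `p > m` the stratum is zero), the stratum `F_p / F_{p−1}` — spanned by the tuples of norm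
exactly `p`, with the induced differential — is isomorphic to the direct sum, over all
partitions `m − p = Σ (u_i + v_i)`, of copies of the reduced cellular chain complex
`C̃_*(C_p(D)^∞)` of the disc (`g = 0`), with degrees shifted by `m − p`. -/
theorem filtration_strata_are_disc_complexes (g m : ℕ) :
    (∀ h h' : ConfTuple g m, cellCoef h h' ≠ 0 → h'.fnorm ≤ h.fnorm) ∧
    ∀ p : ℕ, p ≤ m →
      ∃ e : {h : ConfTuple g m // h.fnorm = p} ≃ (Splittings g (m - p) × ConfTuple 0 p),
      (∀ h, h.1.dim = (e h).2.dim + (m - p)) ∧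
      (∀ h h' : {h : ConfTuple g m // h.fnorm = p},
        cellCoef h.1 h'.1 =
          if (e h).1 = (e h').1 then cellCoef (e h).2 (e h').2 else 0) :=
  ⟨fun _ _ => ConfTuple.fnorm_le_of_cellCoef_ne_zero, fun _ hp =>
    ⟨ConfTuple.stratumEquiv hp, ConfTuple.dim_eq_dim_stratumEquiv_add hp,
      ConfTuple.cellCoef_eq_cellCoef_stratumEquiv hp⟩⟩
end

section
/- Every generalised symmetric chain κ(p, α, u, v) is a cycle in the reduced cellular Z/2-chain complex C̃_*(C_m(Σ_{g,1})^∞): its inner boundaries cancel in pairs exactly as for Fuchs' symmetric chains in the disc, and the left outer boundary of each tuple (l, x, u, v) occurring in κ(p, α, u, v) cancels against the right outer boundary of the cyclically shifted tuple (l, x', u, v) with x'_l = x_1 and x'_i = x_{i+1}. -/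
open scoped Classical

/-- The generalised symmetric chain `κ(p, α, u₀, v₀)` (Definition 3.5), as a `ℤ/2`-valued
function on the tuples indexing the cells of `C_m(Σ_{g,1})^∞`: the (finite) sum of all
tuples `h = (l, x, u₀, v₀)` whose entries `x_i` are powers of `2`, with exactly `α j` entries
equal to `2^j` for every `j`. -/
noncomputable def genSymChain {g m : ℕ} (α : ℕ →₀ ℕ) (u₀ v₀ : Fin g → ℕ) :
    ConfTuple g m → ZMod 2 := fun h =>
  if h.u = u₀ ∧ h.v = v₀ ∧ (∀ a ∈ h.x, ∃ j : ℕ, a = 2 ^ j) ∧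
      (∀ j : ℕ, h.x.count (2 ^ j) = α j)
  then 1 else 0

/-!
A generalised symmetric chain is invariant under permuting the entries of `x`. Its inner
boundary terms therefore cancel in pairs: merging positions `i, i+1` of `h` gives the same face,
with the same coefficient `binom(a+b, a) = binom(a+b, b)`, as merging them in `h` with these two
entries swapped, and a tuple fixed by the swap (`a = b`) contributes the even number
`binom(2a, a)`. The left outer face of `h` is the right outer face of its cyclic rotation, so the
left and right contributions agree and cancel mod 2.
-/

namespace List

variable {α : Type*}

def swapAdj : ℕ → List α → List α
  | 0, a :: b :: l => b :: a :: l
  | i + 1, a :: l => a :: swapAdj i l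
  | _, l => l

theorem swapAdj_perm (i : ℕ) (l : List α) : l.swapAdj i ~ l := by
  fun_induction swapAdj <;> grind [Perm.swap, Perm.cons]

theorem swapAdj_append_cons_cons (T D : List α) (a b : α) :
    (T ++ a :: b :: D).swapAdj T.length = T ++ b :: a :: D := by
  induction T with
  | nil => rfl
  | cons c T ih => simp [swapAdj, ih]

theorem swapAdj_of_length_le {i : ℕ} {l : List α} (hl : l.length ≤ i + 1) :
    l.swapAdj i = l := by
  induction l generalizing i with
  | nil => cases i <;> rfl
  | cons a l ih =>
    cases i with
    | zero => cases l <;> simp_all [swapAdj]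
    | succ i => simp [swapAdj, ih (by simpa using hl)]

theorem exists_eq_append_cons_cons {i : ℕ} {l : List α} (hi : i + 1 < l.length) :
    ∃ T a b D, T.length = i ∧ l = T ++ a :: b :: D := by
  obtain ⟨a, b, D, hD⟩ : ∃ a b D, l.drop i = a :: b :: D := by
    match hd : l.drop i with
    | a :: b :: D => exact ⟨a, b, D, rfl⟩
    | [] | [_] => have := congrArg length hd; simp at this; omega
  exact ⟨l.take i, a, b, D, by simp; omega, by rw [← hD, take_append_drop]⟩

theorem swapAdj_involutive (i : ℕ) : Function.Involutive (swapAdj (α := α) i) := by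
  intro l
  by_cases hi : i + 1 < l.length
  · obtain ⟨T, a, b, D, rfl, rfl⟩ := exists_eq_append_cons_cons hi
    rw [swapAdj_append_cons_cons, swapAdj_append_cons_cons]
  · have hl : l.length ≤ i + 1 := by omega
    rw [swapAdj_of_length_le hl, swapAdj_of_length_le hl]

theorem rotate_one_rotate_length_sub_one (l : List α) :
    (l.rotate 1).rotate (l.length - 1) = l := by
  cases l with
  | nil => rfl
  | cons a t =>
    rw [rotate_rotate, length_cons, Nat.add_sub_cancel, Nat.add_comm, ← length_cons (a := a),
      rotate_length]

theorem rotate_length_sub_one_rotate_one (l : List α) :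
    (l.rotate (l.length - 1)).rotate 1 = l := by
  cases l with
  | nil => rfl
  | cons a t =>
    rw [rotate_rotate, length_cons, Nat.add_sub_cancel, ← length_cons (a := a), rotate_length]

end List

namespace ConfTuple

variable {g m : ℕ}

theorem ext_s5 {h₁ h₂ : ConfTuple g m} (hx : h₁.x = h₂.x) (hu : h₁.u = h₂.u) (hv : h₁.v = h₂.v) :
    h₁ = h₂ := by
  cases h₁; cases h₂; simp_all

theorem length_x_le (h : ConfTuple g m) : h.x.length ≤ m := by
  have := h.total
  have := List.length_le_sum_of_one_le h.x h.x_pos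
  omega

theorem le_of_mem_x (h : ConfTuple g m) {a : ℕ} (ha : a ∈ h.x) : a ≤ m := by
  have := h.total
  have := List.le_sum_of_mem ha
  omega

theorem u_add_v_le (h : ConfTuple g m) (i : Fin g) : h.u i + h.v i ≤ m := by
  have := h.total
  have := Finset.single_le_sum (f := fun i => h.u i + h.v i) (fun _ _ => Nat.zero_le _)
    (Finset.mem_univ i)
  omega

instance : Finite (ConfTuple g m) := by
  let S : Set (List ℕ) := List.map Fin.val '' {l : List (Fin (m + 1)) | l.length ≤ m}
  have hS : S.Finite := (List.finite_length_le _ m).image _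
  have hxS (h : ConfTuple g m) : h.x ∈ S := by
    refine ⟨h.x.pmap (fun a ha => ⟨a, Nat.lt_succ_of_le ha⟩) fun a => h.le_of_mem_x, ?_, ?_⟩
    · simpa using h.length_x_le
    · simp [List.map_pmap]
  have := hS.to_subtype
  refine Finite.of_injective (β := S × (Fin g → Fin (m + 1)) × (Fin g → Fin (m + 1)))
    (fun h => (⟨h.x, hxS h⟩, fun i => ⟨h.u i, by have := h.u_add_v_le i; omega⟩,
      fun i => ⟨h.v i, by have := h.u_add_v_le i; omega⟩)) fun h₁ h₂ he => ?_
  simp only [Prod.mk.injEq, Subtype.mk.injEq, funext_iff, Fin.mk.injEq] at he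
  exact ext_s5 he.1 (funext he.2.1) (funext he.2.2)

@[simps]
def withX (h : ConfTuple g m) (y : List ℕ) (hy : y.Perm h.x) : ConfTuple g m where
  x := y
  u := h.u
  v := h.v
  x_pos a ha := h.x_pos a (hy.mem_iff.mp ha)
  total := hy.sum_eq ▸ h.total

def swapAdj (i : ℕ) (h : ConfTuple g m) : ConfTuple g m :=
  h.withX (h.x.swapAdj i) (h.x.swapAdj_perm i)

theorem swapAdj_involutive (i : ℕ) : Function.Involutive (swapAdj (g := g) (m := m) i) :=
  fun h => ext_s5 (List.swapAdj_involutive i h.x) rfl rfl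

def rotate (n : ℕ) (h : ConfTuple g m) : ConfTuple g m :=
  h.withX (h.x.rotate n) (h.x.rotate_perm n)

def rotateEquiv : ConfTuple g m ≃ ConfTuple g m where
  toFun := rotate 1
  invFun h := h.rotate (h.x.length - 1)
  left_inv h := ext_s5 (by simpa [rotate] using h.x.rotate_one_rotate_length_sub_one) rfl rfl
  right_inv h := ext_s5 (by simpa [rotate] using h.x.rotate_length_sub_one_rotate_one) rfl rfl

end ConfTuple

section Boundary

variable {g m : ℕ}

noncomputable def innerTerm (h h' : ConfTuple g m) (i : ℕ) : ZMod 2 :=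
  if i + 1 < h.x.length ∧ h'.u = h.u ∧ h'.v = h.v ∧
      h'.x = h.x.take i ++ (h.x.getD i 0 + h.x.getD (i + 1) 0) :: h.x.drop (i + 2)
  then (Nat.choose (h.x.getD i 0 + h.x.getD (i + 1) 0) (h.x.getD i 0) : ZMod 2)
  else 0

theorem innerTerm_of_length_le {h : ConfTuple g m} (h' : ConfTuple g m) {i : ℕ}
    (hi : h.x.length ≤ i + 1) : innerTerm h h' i = 0 :=
  if_neg fun hc => by omega

theorem innerTerm_of_x_eq {h : ConfTuple g m} (h' : ConfTuple g m) {T D : List ℕ} {a b : ℕ}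
    (hx : h.x = T ++ a :: b :: D) :
    innerTerm h h' T.length =
      if h'.u = h.u ∧ h'.v = h.v ∧ h'.x = T ++ (a + b) :: D
      then (Nat.choose (a + b) a : ZMod 2) else 0 := by
  simp [innerTerm, hx, List.getD_eq_getElem?_getD, List.drop_append, List.drop_eq_nil_of_le]

theorem innerCoef_eq_sum_range (h h' : ConfTuple g m) {N : ℕ} (hN : h.x.length ≤ N) :
    innerCoef h h' = ∑ i ∈ Finset.range N, innerTerm h h' i :=
  Finset.sum_subset (Finset.range_subset_range.mpr hN) fun _ _ hi =>
    innerTerm_of_length_le h' (by simp at hi; omega)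

theorem innerTerm_swapAdj (h h' : ConfTuple g m) (i : ℕ) :
    innerTerm (h.swapAdj i) h' i = innerTerm h h' i := by
  by_cases hi : i + 1 < h.x.length
  · obtain ⟨T, a, b, D, rfl, hx⟩ := List.exists_eq_append_cons_cons hi
    have hsx : (h.swapAdj T.length).x = T ++ b :: a :: D := by
      simp [ConfTuple.swapAdj, hx, List.swapAdj_append_cons_cons]
    rw [innerTerm_of_x_eq h' hsx, innerTerm_of_x_eq h' hx, Nat.add_comm b a,
      ← Nat.choose_symm_add]
    rfl
  · have hl : h.x.length ≤ i + 1 := by omega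
    have hsl : (h.swapAdj i).x.length ≤ i + 1 := by
      simpa [ConfTuple.swapAdj, (h.x.swapAdj_perm i).length_eq] using hl
    rw [innerTerm_of_length_le h' hsl, innerTerm_of_length_le h' hl]

theorem innerTerm_eq_zero_of_swapAdj_eq {h : ConfTuple g m} (h' : ConfTuple g m) {i : ℕ}
    (hfix : h.swapAdj i = h) : innerTerm h h' i = 0 := by
  by_cases hi : i + 1 < h.x.length
  · obtain ⟨T, a, b, D, rfl, hx⟩ := List.exists_eq_append_cons_cons hi
    have hab : b = a := by
      have := congrArg ConfTuple.x hfix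
      simp [ConfTuple.swapAdj, hx, List.swapAdj_append_cons_cons] at this
      exact this.1
    subst hab
    have hb : 1 ≤ b := h.x_pos b (by simp [hx])
    rw [innerTerm_of_x_eq h' hx, ← two_mul, ← Nat.centralBinom_eq_two_mul_choose,
      (ZMod.natCast_eq_zero_iff _ 2).mpr (Nat.two_dvd_centralBinom_of_one_le hb), ite_self]
  · exact innerTerm_of_length_le h' (by omega)

theorem leftCoef_eq_rightCoef_rotate_one (h h' : ConfTuple g m) :
    leftCoef h h' = rightCoef (h.rotate 1) h' := by
  rcases hx : h.x with _ | ⟨a, t⟩ <;> simp [leftCoef, rightCoef, ConfTuple.rotate, hx]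

end Boundary

theorem Finset.sum_univ_eq_zero_of_involutive {ι R : Type*} [Fintype ι] [Ring R] [CharP R 2]
    {f : ι → R} {σ : ι → ι} (hσ : Function.Involutive σ) (hf : ∀ a, f (σ a) = f a)
    (hfix : ∀ a, σ a = a → f a = 0) : ∑ a, f a = 0 :=
  Finset.sum_ninvolution σ (fun a => by rw [hf, CharTwo.add_self_eq_zero])
    (fun a ha hσa => ha (hfix a hσa)) (fun _ => Finset.mem_univ _) hσ

section SymmetricChain

variable {g m : ℕ}

def IsSymmetricChain (c : ConfTuple g m → ZMod 2) : Prop :=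
  ∀ h y (hy : y.Perm h.x), c (h.withX y hy) = c h

variable {c : ConfTuple g m → ZMod 2}

theorem IsSymmetricChain.sum_mul_innerCoef [Fintype (ConfTuple g m)] (hc : IsSymmetricChain c)
    (h' : ConfTuple g m) : ∑ h, c h * innerCoef h h' = 0 := by
  simp_rw [fun h => innerCoef_eq_sum_range h h' h.length_x_le, Finset.mul_sum]
  rw [Finset.sum_comm]
  refine Finset.sum_eq_zero fun i _ => Finset.sum_univ_eq_zero_of_involutive
    (ConfTuple.swapAdj_involutive i) (fun h => ?_) fun h hfix => ?_
  · rw [innerTerm_swapAdj, ConfTuple.swapAdj, hc]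
  · rw [innerTerm_eq_zero_of_swapAdj_eq h' hfix, mul_zero]

theorem IsSymmetricChain.sum_mul_leftCoef [Fintype (ConfTuple g m)] (hc : IsSymmetricChain c)
    (h' : ConfTuple g m) : ∑ h, c h * leftCoef h h' = ∑ h, c h * rightCoef h h' := by
  rw [← ConfTuple.rotateEquiv.sum_comp (fun h => c h * rightCoef h h')]
  refine Finset.sum_congr rfl fun h _ => ?_
  rw [leftCoef_eq_rightCoef_rotate_one]
  exact congrArg (· * rightCoef (h.rotate 1) h') (hc h _ (h.x.rotate_perm 1)).symm

theorem IsSymmetricChain.isCycle (hc : IsSymmetricChain c) (h' : ConfTuple g m) :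
    ∑ᶠ h : ConfTuple g m, c h * cellCoef h h' = 0 := by
  have := Fintype.ofFinite (ConfTuple g m)
  simp only [finsum_eq_sum_of_fintype, cellCoef, mul_add, Finset.sum_add_distrib,
    hc.sum_mul_innerCoef, hc.sum_mul_leftCoef, zero_add, CharTwo.add_self_eq_zero]

theorem isSymmetricChain_genSymChain (α : ℕ →₀ ℕ) (u₀ v₀ : Fin g → ℕ) :
    IsSymmetricChain (genSymChain (m := m) α u₀ v₀) := by
  intro h y hy
  simp only [genSymChain, ConfTuple.withX_x, hy.mem_iff, hy.count_eq]
  rfl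

end SymmetricChain

theorem generalised_symmetric_chain_is_cycle_general
    (g m : ℕ) (α : ℕ →₀ ℕ) (u₀ v₀ : Fin g → ℕ)
    (h' : ConfTuple g m) :
    ∑ᶠ h : ConfTuple g m, genSymChain α u₀ v₀ h * cellCoef h h' = 0 :=
  (isSymmetricChain_genSymChain α u₀ v₀).isCycle h'

/-- If `p = Σ_j α_j 2^j` and `m = p + Σ_i (u_i + v_i)`, then the
generalised symmetric chain `κ(p, α, u, v)` is a cycle of the reduced cellular
`ℤ/2`-chain complex of `C_m(Σ_{g,1})^∞`: for every tuple `h'`, the total coefficient of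
`h'` in the boundary of `κ(p, α, u, v)` vanishes. -/
theorem generalised_symmetric_chain_is_cycle
    (g m p : ℕ) (α : ℕ →₀ ℕ) (u₀ v₀ : Fin g → ℕ)
    (hp : p = α.sum fun j a => a * 2 ^ j)
    (hm : m = p + ∑ i, (u₀ i + v₀ i))
    (h' : ConfTuple g m) :
    ∑ᶠ h : ConfTuple g m, genSymChain α u₀ v₀ h * cellCoef h h' = 0 :=
  generalised_symmetric_chain_is_cycle_general g m α u₀ v₀ h'
end
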